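/- For any positive integer c, 6c·s(1,c) is an integer; more generally, for coprime a, c with c > 0, 6c·s(a,c) ∈ ℤ. -/

import Mathlib

/-- The sawtooth function `((x))`. -/
noncomputable def saw (x : ℝ) : ℝ :=
  open Classical in
  if ∃ n : ℤ, (n : ℝ) = x then 0 else x - ⌊x⌋ - 1/2

/-- The Dedekind sum `s(a,c) = ∑_{k=1}^{c-1} ((k/c))((ak/c))`. -/
noncomputable def dsum (a c : ℤ) : ℝ :=
  ∑ k ∈ Finset.Ico 1 c.toNat, saw ((k : ℝ) / c) * saw ((a : ℝ) * k / c)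

/-!
For `0 < k < c` the sawtooth values are `((k/c)) = (2k - c)/(2c)` and `((ak/c)) = (2r - c)/(2c)`
with `r = ak mod c` (coprimality keeps `ak/c` off the integers), so `4c² s(a,c)` is the integer
`∑ (2k - c)(2r - c)`. Modulo `2c` one may replace `r` by `ak`, and
`3 ∑_{k=1}^{c-1} (2k - c)(2ak - c) = a c (c - 1)(c - 2)` is divisible by `2c`; hence so is
`12c² s(a,c)`.
-/

theorem saw_intCast_div {m c : ℤ} (hc : 0 < c) (hm : ¬ c ∣ m) :
    saw ((m : ℝ) / c) = (2 * (m % c : ℤ) - c) / (2 * c) := by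
  lift c to ℕ using hc.le
  have hc' : (0 : ℝ) < c := by exact_mod_cast hc
  have hnot_int : ¬ ∃ n : ℤ, (n : ℝ) = m / c := by
    rintro ⟨n, hn⟩
    refine hm ⟨n, ?_⟩
    rw [eq_div_iff hc'.ne'] at hn
    exact_mod_cast hn.symm.trans (mul_comm _ _)
  rw [saw, Int.cast_natCast, if_neg hnot_int, Int.self_sub_floor,
    Int.fract_div_intCast_eq_div_intCast_mod]
  field_simp

theorem sq_mul_dsum_natCast {a : ℤ} {n : ℕ} (ha : IsCoprime a n) :
    (2 * n) ^ 2 * dsum a n =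
      ((∑ k ∈ Finset.Ico 1 n, (2 * k - n) * (2 * (a * k % n) - n) : ℤ) : ℝ) := by
  rw [dsum, Int.toNat_natCast, Finset.mul_sum, Int.cast_sum]
  refine Finset.sum_congr rfl fun k hk => ?_
  obtain ⟨hk1, hkn⟩ := Finset.mem_Ico.mp hk
  have hn : (0 : ℤ) < n := by omega
  have hn' : (n : ℝ) ≠ 0 := by exact_mod_cast (by omega : n ≠ 0)
  have hk : ¬ (n : ℤ) ∣ k := fun h => by
    have := Int.le_of_dvd (by omega) h
    omega
  have hak : ¬ (n : ℤ) ∣ a * k := fun h => hk (ha.symm.dvd_of_dvd_mul_left h)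
  have hsaw_k := saw_intCast_div hn hk
  have hsaw_ak := saw_intCast_div hn hak
  rw [Int.emod_eq_of_lt (by omega) (by omega)] at hsaw_k
  push_cast at hsaw_k hsaw_ak ⊢
  rw [hsaw_k, hsaw_ak]
  field_simp

theorem three_mul_sum_range_mul (a m : ℤ) (n : ℕ) :
    3 * ∑ k ∈ Finset.range n, (2 * k - m) * (2 * a * k - m) =
      2 * a * (n - 1) * n * (2 * n - 1) - 3 * m * (1 + a) * (n - 1) * n + 3 * n * m ^ 2 := by
  induction n with
  | zero => simp
  | succ n ih =>
    rw [Finset.sum_range_succ, mul_add, ih]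
    push_cast
    ring

theorem three_mul_sum_Ico_mul (a : ℤ) (n : ℕ) :
    3 * ∑ k ∈ Finset.Ico 1 n, (2 * k - n) * (2 * a * k - n) = a * n * (n - 1) * (n - 2) := by
  rcases Nat.eq_zero_or_pos n with rfl | hn
  · simp
  have hsum := three_mul_sum_range_mul a n n
  rw [Finset.sum_range_eq_add_Ico _ hn, mul_add] at hsum
  linear_combination hsum

theorem two_mul_dvd_three_mul_sum (a : ℤ) (n : ℕ) :
    2 * (n : ℤ) ∣ 3 * ∑ k ∈ Finset.Ico 1 n, (2 * k - n) * (2 * (a * k % n) - n) := by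
  have hmod : ∑ k ∈ Finset.Ico 1 n, (2 * k - n) * (2 * (a * k % n) - n) ≡
      ∑ k ∈ Finset.Ico 1 n, (2 * k - n) * (2 * a * k - n) [ZMOD 2 * n] :=
    Int.ModEq.sum fun k _ => by
      rw [mul_assoc 2 a]
      exact (((Int.mod_modEq _ _).mul_left' (c := 2)).sub_right _).mul_left _
  rw [← Int.modEq_zero_iff_dvd]
  refine (hmod.mul_left 3).trans ?_
  rw [three_mul_sum_Ico_mul, Int.modEq_zero_iff_dvd]
  obtain ⟨t, ht⟩ := Int.even_mul_pred_self ((n : ℤ) - 1)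
  exact ⟨a * t, by linear_combination a * n * ht⟩

theorem exists_intCast_eq_six_mul_dsum {a c : ℤ} (hc : 0 < c) (ha : IsCoprime a c) :
    ∃ n : ℤ, (n : ℝ) = 6 * c * dsum a c := by
  lift c to ℕ using hc.le
  obtain ⟨q, hq⟩ := two_mul_dvd_three_mul_sum a c
  refine ⟨q, ?_⟩
  have hc' : (c : ℝ) ≠ 0 := by exact_mod_cast hc.ne'
  have h := congrArg (Int.cast : ℤ → ℝ) hq
  rw [Int.cast_mul, Int.cast_ofNat, ← sq_mul_dsum_natCast ha] at h
  push_cast at h ⊢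
  apply mul_left_cancel₀ (mul_ne_zero two_ne_zero hc')
  linear_combination -h

theorem dsum_denominator (c : ℤ) (hc : 0 < c) :
    (∃ n : ℤ, (n : ℝ) = 6 * c * dsum 1 c) ∧
    ∀ a : ℤ, IsCoprime a c → ∃ n : ℤ, (n : ℝ) = 6 * c * dsum a c :=
  ⟨exists_intCast_eq_six_mul_dsum hc isCoprime_one_left,
    fun _ ha => exists_intCast_eq_six_mul_dsum hc ha⟩
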